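/- Let d be a positive natural number and let (a_n)_{n≥1} be a sequence of positive definite d×d complex matrices such that ∑_{n=1}^∞ Tr(a_n) < ∞. Then ∑_{n=1}^∞ Tr exp((1/n) ∑_{k=1}^n log a_k) ≤ e · ∑_{n=1}^∞ Tr(a_n). (This is a non-commutative version of Carleman's inequality.) -/

import Mathlib

open scoped ComplexOrder

open Matrix Finset

/-- `log A` for a (positive definite) matrix `A`, via the continuous functional calculus. -/
noncomputable def Matrix.cfcLog {d : ℕ} (A : Matrix (Fin d) (Fin d) ℂ) :
    Matrix (Fin d) (Fin d) ℂ :=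
  cfc Real.log A

variable {d : ℕ}

local notation "M" => Matrix (Fin d) (Fin d) ℂ

/-- exp commutes with unitary conjugation. -/
lemma exp_unitary_conj (U : Matrix.unitaryGroup (Fin d) ℂ) (A : M) :
    NormedSpace.exp ((U : M) * A * star (U : M))
      = (U : M) * NormedSpace.exp A * star (U : M) := by
  have h1 : star (U : M) * (U : M) = 1 := U.2.1
  have h2 : (U : M) * star (U : M) = 1 := U.2.2
  have hinv : (U : M)⁻¹ = star (U : M) := Matrix.inv_eq_left_inv h1
  rw [← hinv, Matrix.exp_conj]
  exact Matrix.isUnit_iff_isUnit_det _ |>.mpr (Matrix.isUnit_det_of_right_inverse h2)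

lemma trace_conj_unitary (U : Matrix.unitaryGroup (Fin d) ℂ) (A : M) :
    Matrix.trace ((U : M) * A * star (U : M)) = Matrix.trace A := by
  rw [Matrix.trace_mul_cycle, U.2.1, Matrix.one_mul]

/-- Spectral form of the matrix exponential of a Hermitian matrix. -/
lemma exp_eq_spectral {H : M} (hH : H.IsHermitian) :
    NormedSpace.exp H = (hH.eigenvectorUnitary : M)
      * Matrix.diagonal (fun i => (Real.exp (hH.eigenvalues i) : ℂ))
      * star (hH.eigenvectorUnitary : M) := by
  conv_lhs => rw [hH.spectral_theorem, Unitary.conjStarAlgAut_apply]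
  rw [exp_unitary_conj, Matrix.exp_diagonal]
  have : NormedSpace.exp (RCLike.ofReal ∘ hH.eigenvalues : Fin d → ℂ)
      = fun i => (Real.exp (hH.eigenvalues i) : ℂ) := by
    funext i
    rw [Pi.coe_exp, Function.comp_apply, ← Complex.exp_eq_exp_ℂ]
    exact (Complex.ofReal_exp _).symm
  rw [this]

lemma trace_exp_eq_sum {H : M} (hH : H.IsHermitian) :
    (Matrix.trace (NormedSpace.exp H)).re = ∑ i, Real.exp (hH.eigenvalues i) := by
  rw [exp_eq_spectral hH, Matrix.trace_mul_cycle, hH.eigenvectorUnitary.2.1, Matrix.one_mul,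
    Matrix.trace_diagonal]
  rw [Complex.re_sum]
  exact Finset.sum_congr rfl fun i _ => Complex.exp_ofReal_re _

lemma trace_exp_nonneg {H : M} (hH : H.IsHermitian) :
    0 ≤ (Matrix.trace (NormedSpace.exp H)).re := by
  rw [trace_exp_eq_sum hH]
  exact Finset.sum_nonneg fun i _ => (Real.exp_pos _).le

lemma conj_diagonal_apply (U : Matrix.unitaryGroup (Fin d) ℂ) (v : Fin d → ℂ) (i : Fin d) :
    ((U : M) * Matrix.diagonal v * star (U : M)) i i
      = ∑ j, (Complex.normSq ((U : M) i j) : ℂ) * v j := by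
  rw [Matrix.mul_apply]
  refine Finset.sum_congr rfl fun j _ => ?_
  rw [Matrix.mul_diagonal, Matrix.star_apply, Complex.star_def,
    mul_right_comm, Complex.mul_conj]

lemma row_normSq_sum (U : Matrix.unitaryGroup (Fin d) ℂ) (i : Fin d) :
    ∑ j, Complex.normSq ((U : M) i j) = 1 := by
  have h2 : (U : M) * star (U : M) = 1 := U.2.2
  have h3 : ((U : M) * star (U : M)) i i = 1 := by rw [h2, Matrix.one_apply_eq]
  rw [Matrix.mul_apply] at h3
  simp_rw [Matrix.star_apply, Complex.star_def, Complex.mul_conj] at h3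
  exact_mod_cast h3

lemma diag_re (U : Matrix.unitaryGroup (Fin d) ℂ) (μ : Fin d → ℝ) (i : Fin d) :
    (((U : M) * Matrix.diagonal (fun j => (μ j : ℂ)) * star (U : M)) i i).re
      = ∑ j, Complex.normSq ((U : M) i j) * μ j := by
  rw [conj_diagonal_apply, Complex.re_sum]
  exact Finset.sum_congr rfl fun j _ => by rw [← Complex.ofReal_mul, Complex.ofReal_re]

/-- Jensen's inequality for diagonal entries of `exp` of a Hermitian matrix. -/
lemma diag_exp_jensen {H : M} (hH : H.IsHermitian) (i : Fin d) :
    Real.exp ((H i i).re) ≤ ((NormedSpace.exp H) i i).re := by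
  set U := hH.eigenvectorUnitary with hU
  have h1 : (H i i).re = ∑ j, Complex.normSq ((U : M) i j) * hH.eigenvalues j := by
    conv_lhs => rw [hH.spectral_theorem, Unitary.conjStarAlgAut_apply]
    exact diag_re U hH.eigenvalues i
  have h2 : ((NormedSpace.exp H) i i).re
      = ∑ j, Complex.normSq ((U : M) i j) * Real.exp (hH.eigenvalues j) := by
    conv_lhs => rw [exp_eq_spectral hH]
    exact diag_re U (fun j => Real.exp (hH.eigenvalues j)) i
  rw [h1, h2]
  have := convexOn_exp.map_sum_le (t := Finset.univ) (w := fun j => Complex.normSq ((U : M) i j))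
    (p := hH.eigenvalues) (fun j _ => Complex.normSq_nonneg _) (row_normSq_sum U i)
    (fun j _ => Set.mem_univ _)
  simpa [smul_eq_mul] using this

lemma exp_unitary_conj' (U : Matrix.unitaryGroup (Fin d) ℂ) (A : M) :
    NormedSpace.exp (star (U : M) * A * (U : M))
      = star (U : M) * NormedSpace.exp A * (U : M) := by
  have h2 : (U : M) * star (U : M) = 1 := U.2.2
  have hinv : (star (U : M))⁻¹ = (U : M) := Matrix.inv_eq_left_inv h2
  have h := Matrix.exp_conj (star (U : M)) A
    (Matrix.isUnit_iff_isUnit_det _ |>.mpr (Matrix.isUnit_det_of_right_inverse U.2.1))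
  rwa [hinv] at h

lemma trace_conj_unitary' (U : Matrix.unitaryGroup (Fin d) ℂ) (A : M) :
    Matrix.trace (star (U : M) * A * (U : M)) = Matrix.trace A := by
  rw [Matrix.trace_mul_cycle, U.2.2, Matrix.one_mul]

lemma isHermitian_conj {A : M} (hA : A.IsHermitian) (U : Matrix.unitaryGroup (Fin d) ℂ) :
    (star (U : M) * A * (U : M)).IsHermitian := by
  unfold Matrix.IsHermitian
  rw [Matrix.conjTranspose_mul, Matrix.conjTranspose_mul, hA.eq]
  simp [Matrix.mul_assoc, Matrix.star_eq_conjTranspose]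

/-- Key inequality : trace of exp of average is at most average of traces of exps. -/
lemma key_ineq (n : ℕ) (H : ℕ → M) (hH : ∀ k, (H k).IsHermitian) :
    (Matrix.trace (NormedSpace.exp
        (((n : ℝ) + 1)⁻¹ • ∑ k ∈ Finset.range (n + 1), H k))).re
      ≤ ((n : ℝ) + 1)⁻¹ * ∑ k ∈ Finset.range (n + 1), 
          (Matrix.trace (NormedSpace.exp (H k))).re := by
  set c : ℝ := ((n : ℝ) + 1)⁻¹ with hc
  have hcpos : 0 < c := by positivity
  set S : M := ∑ k ∈ Finset.range (n + 1), H k with hSdef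
  have hS : S.IsHermitian := by
    unfold Matrix.IsHermitian
    rw [hSdef, Matrix.conjTranspose_sum]
    exact Finset.sum_congr rfl fun k _ => (hH k).eq
  have hM : (c • S).IsHermitian := by
    unfold Matrix.IsHermitian
    rw [Matrix.conjTranspose_smul, hS.eq]
    norm_num
  set U := hM.eigenvectorUnitary with hUdef
  set lam := hM.eigenvalues with hlamdef
  set B : ℕ → M := fun k => star (U : M) * H k * (U : M) with hBdef
  have hBherm : ∀ k, (B k).IsHermitian := fun k => isHermitian_conj (hH k) U
  have hdiag : star (U : M) * (c • S) * (U : M) = Matrix.diagonal (RCLike.ofReal ∘ lam) :=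
    by have h := hM.conjStarAlgAut_star_eigenvectorUnitary; rwa [Unitary.conjStarAlgAut_star_apply] at h
  have hsum : star (U : M) * (c • S) * (U : M) = c • ∑ k ∈ Finset.range (n + 1), B k := by
    rw [hSdef, Matrix.mul_smul, Matrix.smul_mul]
    congr 1
    rw [Finset.mul_sum, Finset.sum_mul]
  have hlam : ∀ i, lam i = c * ∑ k ∈ Finset.range (n + 1), ((B k) i i).re := by
    intro i
    have h := (hdiag.symm.trans hsum)
    have h2 := congrArg (fun X : M => (X i i).re) h
    simp only [Matrix.diagonal_apply_eq, Function.comp_apply, Matrix.smul_apply,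
      Matrix.sum_apply] at h2
    rw [Complex.real_smul, Complex.re_ofReal_mul, Complex.re_sum] at h2
    simpa using h2
  have hwsum : ∑ _k ∈ Finset.range (n + 1), c = 1 := by
    rw [Finset.sum_const, Finset.card_range, nsmul_eq_mul, hc]
    push_cast
    field_simp
  calc (Matrix.trace (NormedSpace.exp (c • S))).re
      = ∑ i, Real.exp (lam i) := trace_exp_eq_sum hM
    _ ≤ ∑ i, ∑ k ∈ Finset.range (n + 1), c * Real.exp (((B k) i i).re) := by
        refine Finset.sum_le_sum fun i _ => ?_
        rw [hlam i, Finset.mul_sum]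
        have := convexOn_exp.map_sum_le (t := Finset.range (n + 1)) (w := fun _ => c)
          (p := fun k => ((B k) i i).re) (fun k _ => hcpos.le) hwsum
          (fun k _ => Set.mem_univ _)
        simpa [smul_eq_mul] using this
    _ ≤ ∑ i, ∑ k ∈ Finset.range (n + 1), c * ((NormedSpace.exp (B k)) i i).re := by
        refine Finset.sum_le_sum fun i _ => Finset.sum_le_sum fun k _ => ?_
        exact mul_le_mul_of_nonneg_left (diag_exp_jensen (hBherm k) i) hcpos.le
    _ = c * ∑ k ∈ Finset.range (n + 1), (Matrix.trace (NormedSpace.exp (H k))).re := by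
        rw [Finset.sum_comm, Finset.mul_sum]
        refine Finset.sum_congr rfl fun k _ => ?_
        rw [← Finset.mul_sum]
        congr 1
        have hexp : NormedSpace.exp (B k) = star (U : M) * NormedSpace.exp (H k) * (U : M) :=
          exp_unitary_conj' U (H k)
        have : Matrix.trace (NormedSpace.exp (B k))
            = Matrix.trace (NormedSpace.exp (H k)) := by
          rw [hexp, trace_conj_unitary']
        rw [← this, Matrix.trace, Complex.re_sum]
        rfl

lemma real_smul_matrix (r : ℝ) (A : M) : r • A = (r : ℂ) • A := by
  ext i j
  simp [Complex.real_smul]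

lemma isHermitian_unitary_diag (U : Matrix.unitaryGroup (Fin d) ℂ) (v : Fin d → ℝ) :
    (((U : M) * Matrix.diagonal (fun i => (v i : ℂ)) * star (U : M))).IsHermitian := by
  unfold Matrix.IsHermitian
  rw [Matrix.conjTranspose_mul, Matrix.conjTranspose_mul, Matrix.diagonal_conjTranspose]
  simp [Matrix.mul_assoc, Matrix.star_eq_conjTranspose, Pi.star_def, Complex.star_def,
    Complex.conj_ofReal]

lemma cfcLog_eq {A : M} (hA : A.PosDef) :
    A.cfcLog = (hA.1.eigenvectorUnitary : M)
      * Matrix.diagonal (fun i => (Real.log (hA.1.eigenvalues i) : ℂ))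
      * star (hA.1.eigenvectorUnitary : M) := by
  rw [Matrix.cfcLog, hA.1.cfc_eq]
  rfl

lemma cfcLog_isHermitian {A : M} (hA : A.PosDef) : A.cfcLog.IsHermitian := by
  rw [cfcLog_eq hA]
  exact isHermitian_unitary_diag _ _

lemma smul_one_isHermitian (s : ℝ) : ((s • (1 : M))).IsHermitian := by
  unfold Matrix.IsHermitian
  rw [Matrix.conjTranspose_smul, Matrix.conjTranspose_one]
  simp

lemma exp_cfcLog_shift {A : M} (hA : A.PosDef) (s : ℝ) :
    NormedSpace.exp (A.cfcLog + s • (1 : M)) = Real.exp s • A := by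
  set U := hA.1.eigenvectorUnitary with hU
  set lam := hA.1.eigenvalues with hlam
  have h2 : s • (1 : M) = (U : M) * Matrix.diagonal (fun _ => (s : ℂ)) * star (U : M) := by
    have hD : Matrix.diagonal (fun _ : Fin d => (s : ℂ)) = s • (1 : M) := by
      ext i j
      by_cases h : i = j <;>
        simp [Matrix.diagonal_apply, Matrix.one_apply, h, Complex.real_smul]
    rw [hD, Matrix.mul_smul, Matrix.smul_mul, Matrix.mul_one, U.2.2]
  rw [cfcLog_eq hA, h2, ← hU, ← hlam, ← Matrix.add_mul, ← Matrix.mul_add,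
    Matrix.diagonal_add, exp_unitary_conj, Matrix.exp_diagonal]
  have hexp : NormedSpace.exp (fun i => (Real.log (lam i) : ℂ) + (s : ℂ))
      = fun i => ((Real.exp s * lam i : ℝ) : ℂ) := by
    funext i
    rw [Pi.coe_exp, show ((Real.log (lam i) : ℂ) + (s : ℂ))
        = ((Real.log (lam i) + s : ℝ) : ℂ) by push_cast; rfl,
      ← Complex.exp_eq_exp_ℂ, ← Complex.ofReal_exp, Real.exp_add,
      Real.exp_log (hA.eigenvalues_pos i), mul_comm]
  rw [hexp]
  have hD2 : Matrix.diagonal (fun i => ((Real.exp s * lam i : ℝ) : ℂ))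
      = (Real.exp s : ℂ) • Matrix.diagonal (fun i => (lam i : ℂ)) := by
    ext i j
    by_cases h : i = j <;> simp [Matrix.diagonal_apply, h] <;> push_cast <;> ring
  have hA2 : A = (U : M) * Matrix.diagonal (fun i => (lam i : ℂ)) * star (U : M) :=
    hA.1.spectral_theorem
  rw [hD2, Matrix.mul_smul, Matrix.smul_mul, real_smul_matrix, ← hA2]

lemma trace_exp_cfcLog_shift {A : M} (hA : A.PosDef) (s : ℝ) :
    (Matrix.trace (NormedSpace.exp (A.cfcLog + s • (1 : M)))).re
      = Real.exp s * (Matrix.trace A).re := by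
  rw [exp_cfcLog_shift hA, Matrix.trace_smul, Complex.real_smul, Complex.re_ofReal_mul]

lemma exp_add_smul_one (X : M) (t : ℝ) :
    NormedSpace.exp (X + t • (1 : M)) = Real.exp t • NormedSpace.exp X := by
  have hcomm : Commute X (t • (1 : M)) := (Commute.one_right X).smul_right t
  rw [Matrix.exp_add_of_commute X (t • 1) hcomm]
  have hD : t • (1 : M) = Matrix.diagonal (fun _ : Fin d => (t : ℂ)) := by
    ext i j
    by_cases h : i = j <;> simp [Matrix.diagonal_apply, Matrix.one_apply, h, Complex.real_smul]
  rw [hD, Matrix.exp_diagonal]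
  have h1 : NormedSpace.exp (fun _ : Fin d => (t : ℂ))
      = fun _ : Fin d => ((Real.exp t : ℝ) : ℂ) :=
    funext fun i => by rw [Pi.coe_exp, ← Complex.exp_eq_exp_ℂ, ← Complex.ofReal_exp]
  rw [h1]
  have h2 : Matrix.diagonal (fun _ : Fin d => ((Real.exp t : ℝ) : ℂ))
      = Real.exp t • (1 : M) := by
    ext i j
    by_cases h : i = j <;> simp [Matrix.diagonal_apply, Matrix.one_apply, h, Complex.real_smul]
  rw [h2, mul_smul_comm, mul_one]

lemma per_n_bound (a : ℕ → M) (ha : ∀ k, (a k).PosDef) (sf : ℕ → ℝ) (n : ℕ)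
    (hsf : ∑ k ∈ Finset.range (n + 1), sf k = ((n : ℝ) + 1) * Real.log ((n : ℝ) + 2)) :
    (Matrix.trace (NormedSpace.exp
        (((n : ℝ) + 1)⁻¹ • ∑ k ∈ Finset.range (n + 1), (a k).cfcLog))).re
      ≤ (((n : ℝ) + 1)⁻¹ * ((n : ℝ) + 2)⁻¹) * ∑ k ∈ Finset.range (n + 1),
          Real.exp (sf k) * (Matrix.trace (a k)).re := by
  have hn1 : (0:ℝ) < (n : ℝ) + 1 := by positivity
  have hn2 : (0:ℝ) < (n : ℝ) + 2 := by positivity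
  set H : ℕ → M := fun k => (a k).cfcLog + sf k • (1 : M) with hHdef
  have hHherm : ∀ k, (H k).IsHermitian :=
    fun k => (cfcLog_isHermitian (ha k)).add (smul_one_isHermitian _)
  have key := key_ineq n H hHherm
  have hrhs : ∑ k ∈ Finset.range (n + 1), (Matrix.trace (NormedSpace.exp (H k))).re
      = ∑ k ∈ Finset.range (n + 1), Real.exp (sf k) * (Matrix.trace (a k)).re :=
    Finset.sum_congr rfl fun k _ => trace_exp_cfcLog_shift (ha k) (sf k)
  have hsplit : ((n : ℝ) + 1)⁻¹ • ∑ k ∈ Finset.range (n + 1), H k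
      = (((n : ℝ) + 1)⁻¹ • ∑ k ∈ Finset.range (n + 1), (a k).cfcLog)
        + Real.log ((n : ℝ) + 2) • (1 : M) := by
    rw [hHdef]
    rw [Finset.sum_add_distrib, ← Finset.sum_smul, hsf, smul_add, smul_smul]
    congr 2
    field_simp
  rw [hsplit, exp_add_smul_one, Matrix.trace_smul, Complex.real_smul,
    Complex.re_ofReal_mul, Real.exp_log hn2, hrhs] at key
  calc (Matrix.trace (NormedSpace.exp
        (((n : ℝ) + 1)⁻¹ • ∑ k ∈ Finset.range (n + 1), (a k).cfcLog))).re
      = ((n : ℝ) + 2)⁻¹ * (((n : ℝ) + 2) * (Matrix.trace (NormedSpace.exp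
          (((n : ℝ) + 1)⁻¹ • ∑ k ∈ Finset.range (n + 1), (a k).cfcLog))).re) := by
        field_simp
    _ ≤ ((n : ℝ) + 2)⁻¹ * (((n : ℝ) + 1)⁻¹ * ∑ k ∈ Finset.range (n + 1),
          Real.exp (sf k) * (Matrix.trace (a k)).re) :=
        mul_le_mul_of_nonneg_left key (inv_pos.mpr hn2).le
    _ = (((n : ℝ) + 1)⁻¹ * ((n : ℝ) + 2)⁻¹) * ∑ k ∈ Finset.range (n + 1),
          Real.exp (sf k) * (Matrix.trace (a k)).re := by ring

/-- Carleman weight exponents. -/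
noncomputable def sfun (k : ℕ) : ℝ :=
  ((k : ℝ) + 1) * Real.log ((k : ℝ) + 2) - (k : ℝ) * Real.log ((k : ℝ) + 1)

lemma sfun_sum (n : ℕ) :
    ∑ k ∈ Finset.range (n + 1), sfun k = ((n : ℝ) + 1) * Real.log ((n : ℝ) + 2) := by
  have h := Finset.sum_range_sub (fun m : ℕ => (m : ℝ) * Real.log ((m : ℝ) + 1)) (n + 1)
  simp only [Nat.cast_zero, zero_mul, sub_zero] at h
  have : ∀ k : ℕ, sfun k
      = ((k + 1 : ℕ) : ℝ) * Real.log (((k + 1 : ℕ) : ℝ) + 1)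
        - (k : ℝ) * Real.log ((k : ℝ) + 1) := by
    intro k
    rw [sfun]
    push_cast
    ring_nf
  rw [Finset.sum_congr rfl fun k _ => this k, h]
  push_cast
  ring_nf

lemma sfun_exp_le (k : ℕ) : Real.exp (sfun k) ≤ Real.exp 1 * ((k : ℝ) + 1) := by
  have hk1 : (0:ℝ) < (k : ℝ) + 1 := by positivity
  have hk2 : (0:ℝ) < (k : ℝ) + 2 := by positivity
  have hlog : Real.log (((k : ℝ) + 2) / ((k : ℝ) + 1)) ≤ ((k : ℝ) + 1)⁻¹ := by
    have h1 := Real.log_le_sub_one_of_pos (div_pos hk2 hk1)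
    have h2 : ((k : ℝ) + 2) / ((k : ℝ) + 1) = 1 + ((k : ℝ) + 1)⁻¹ := by
      field_simp
      ring
    rw [h2] at h1
    rw [h2]
    linarith
  have hsf : sfun k ≤ 1 + Real.log ((k : ℝ) + 1) := by
    have h3 : sfun k = ((k : ℝ) + 1) * Real.log (((k : ℝ) + 2) / ((k : ℝ) + 1))
        + Real.log ((k : ℝ) + 1) := by
      rw [Real.log_div hk2.ne' hk1.ne', sfun]
      ring
    have h4 : ((k : ℝ) + 1) * Real.log (((k : ℝ) + 2) / ((k : ℝ) + 1)) ≤ 1 := by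
      calc ((k : ℝ) + 1) * Real.log (((k : ℝ) + 2) / ((k : ℝ) + 1))
          ≤ ((k : ℝ) + 1) * ((k : ℝ) + 1)⁻¹ := by
            exact mul_le_mul_of_nonneg_left hlog hk1.le
        _ = 1 := mul_inv_cancel₀ hk1.ne'
    linarith
  calc Real.exp (sfun k) ≤ Real.exp (1 + Real.log ((k : ℝ) + 1)) := Real.exp_le_exp.mpr hsf
    _ = Real.exp 1 * ((k : ℝ) + 1) := by rw [Real.exp_add, Real.exp_log hk1]

lemma trace_re_nonneg {A : M} (hA : A.PosDef) : 0 ≤ (Matrix.trace A).re := by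
  have h : Matrix.trace A = ∑ i, (hA.1.eigenvalues i : ℂ) := by
    conv_lhs => rw [hA.1.spectral_theorem, Unitary.conjStarAlgAut_apply]
    rw [trace_conj_unitary, Matrix.trace_diagonal]
    rfl
  rw [h, Complex.re_sum]
  have : ∀ i, 0 ≤ ((hA.1.eigenvalues i : ℂ)).re := fun i => by
    simp [Complex.ofReal_re]
    exact (hA.eigenvalues_pos i).le
  exact Finset.sum_nonneg fun i _ => this i

lemma tail_sum_le (k N : ℕ) :
    ∑ n ∈ Finset.Ico k N, (((n : ℝ) + 1)⁻¹ * ((n : ℝ) + 2)⁻¹) ≤ ((k : ℝ) + 1)⁻¹ := by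
  rcases le_or_gt k N with hkN | hkN
  · have heq : ∀ n : ℕ, ((n : ℝ) + 1)⁻¹ * ((n : ℝ) + 2)⁻¹
        = ((n : ℝ) + 1)⁻¹ - ((n : ℝ) + 2)⁻¹ := by
      intro n
      have h1 : (0:ℝ) < (n : ℝ) + 1 := by positivity
      have h2 : (0:ℝ) < (n : ℝ) + 2 := by positivity
      field_simp
      ring
    have hr : ∀ m : ℕ, ∑ n ∈ Finset.range m, (((n : ℝ) + 1)⁻¹ - ((n : ℝ) + 2)⁻¹)
        = 1 - ((m : ℝ) + 1)⁻¹ := by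
      intro m
      induction m with
      | zero => simp
      | succ m ih =>
        rw [Finset.sum_range_succ, ih]
        have h1 : ((m : ℝ) + 1) ≠ 0 := by positivity
        have h2 : ((m : ℝ) + 2) ≠ 0 := by positivity
        push_cast
        field_simp
        ring
    have htel : ∑ n ∈ Finset.Ico k N, (((n : ℝ) + 1)⁻¹ - ((n : ℝ) + 2)⁻¹)
        = ((k : ℝ) + 1)⁻¹ - ((N : ℝ) + 1)⁻¹ := by
      rw [Finset.sum_Ico_eq_sub _ hkN, hr, hr]
      ring
    rw [Finset.sum_congr rfl fun n _ => heq n, htel]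
    have : (0:ℝ) ≤ ((N : ℝ) + 1)⁻¹ := by positivity
    linarith
  · rw [Finset.Ico_eq_empty (by omega), Finset.sum_empty]
    positivity

lemma swap_sum (N : ℕ) (u r : ℕ → ℝ) :
    ∑ n ∈ Finset.range N, r n * ∑ k ∈ Finset.range (n + 1), u k
      = ∑ k ∈ Finset.range N, u k * ∑ n ∈ Finset.Ico k N, r n := by
  calc ∑ n ∈ Finset.range N, r n * ∑ k ∈ Finset.range (n + 1), u k
      = ∑ n ∈ Finset.Ico 0 N, ∑ k ∈ Finset.Ico 0 (n + 1), u k * r n := by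
        rw [← Finset.range_eq_Ico]
        refine Finset.sum_congr rfl fun n _ => ?_
        rw [Finset.range_eq_Ico, Finset.mul_sum]
        exact Finset.sum_congr rfl fun k _ => mul_comm _ _
    _ = ∑ k ∈ Finset.Ico 0 N, ∑ n ∈ Finset.Ico k N, u k * r n :=
        (Finset.sum_Ico_Ico_comm 0 N _).symm
    _ = ∑ k ∈ Finset.range N, u k * ∑ n ∈ Finset.Ico k N, r n := by
        rw [← Finset.range_eq_Ico]
        exact Finset.sum_congr rfl fun k _ => (Finset.mul_sum _ _ _).symm


/-- **Non-commutative Carleman inequality (Theorem 3.4, matrix case).**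
Let `d > 0` and let `(a_n)_{n≥1}` (here indexed by `n : ℕ`, with `a_n := a (n-1)`) be a
sequence of positive definite `d × d` complex matrices such that `∑_{n=1}^∞ Tr(a_n) < ∞`.
Then
`∑_{n=1}^∞ Tr exp((1/n) ∑_{k=1}^n log a_k) ≤ e · ∑_{n=1}^∞ Tr(a_n)`,
where the summand `Tr exp((1/n) ∑_{k=1}^n log a_k)` is the tracial geometric mean
`TG(a_1, …, a_n)` (traces taken as real numbers via their real parts; `exp` is the matrix
exponential and `e` is Euler's number). -/
theorem carleman_trace_matrix_inequality
    {d : ℕ} (hd : 0 < d)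
    (a : ℕ → Matrix (Fin d) (Fin d) ℂ) (ha : ∀ n, (a n).PosDef)
    (h_sum : Summable fun n : ℕ => (Matrix.trace (a n)).re) :
    (∑' n : ℕ, (Matrix.trace (NormedSpace.exp
        (((n : ℝ) + 1)⁻¹ • ∑ k ∈ Finset.range (n + 1), (a k).cfcLog))).re)
      ≤ Real.exp 1 * ∑' n : ℕ, (Matrix.trace (a n)).re := by
  have hGherm : ∀ n : ℕ,
      (((n : ℝ) + 1)⁻¹ • ∑ k ∈ Finset.range (n + 1), (a k).cfcLog).IsHermitian := by
    intro n
    have hs : (∑ k ∈ Finset.range (n + 1), (a k).cfcLog).IsHermitian := by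
      unfold Matrix.IsHermitian
      rw [Matrix.conjTranspose_sum]
      exact Finset.sum_congr rfl fun k _ => (cfcLog_isHermitian (ha k)).eq
    unfold Matrix.IsHermitian
    rw [Matrix.conjTranspose_smul, hs.eq]
    norm_num
  have hTnn : ∀ n : ℕ, 0 ≤ (Matrix.trace (NormedSpace.exp
      (((n : ℝ) + 1)⁻¹ • ∑ k ∈ Finset.range (n + 1), (a k).cfcLog))).re :=
    fun n => trace_exp_nonneg (hGherm n)
  have htnn : ∀ k, 0 ≤ (Matrix.trace (a k)).re := fun k => trace_re_nonneg (ha k)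
  refine Real.tsum_le_of_sum_range_le hTnn fun N => ?_
  calc ∑ n ∈ Finset.range N, (Matrix.trace (NormedSpace.exp
          (((n : ℝ) + 1)⁻¹ • ∑ k ∈ Finset.range (n + 1), (a k).cfcLog))).re
      ≤ ∑ n ∈ Finset.range N, (((n : ℝ) + 1)⁻¹ * ((n : ℝ) + 2)⁻¹)
          * ∑ k ∈ Finset.range (n + 1), Real.exp (sfun k) * (Matrix.trace (a k)).re :=
        Finset.sum_le_sum fun n _ => per_n_bound a ha sfun n (sfun_sum n)
    _ = ∑ k ∈ Finset.range N, (Real.exp (sfun k) * (Matrix.trace (a k)).re)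
          * ∑ n ∈ Finset.Ico k N, (((n : ℝ) + 1)⁻¹ * ((n : ℝ) + 2)⁻¹) :=
        swap_sum N _ _
    _ ≤ ∑ k ∈ Finset.range N, (Real.exp (sfun k) * (Matrix.trace (a k)).re)
          * ((k : ℝ) + 1)⁻¹ := by
        refine Finset.sum_le_sum fun k _ => ?_
        exact mul_le_mul_of_nonneg_left (tail_sum_le k N)
          (mul_nonneg (Real.exp_pos _).le (htnn k))
    _ ≤ ∑ k ∈ Finset.range N, Real.exp 1 * (Matrix.trace (a k)).re := by
        refine Finset.sum_le_sum fun k _ => ?_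
        have h1 := sfun_exp_le k
        have hk1 : (0:ℝ) < (k : ℝ) + 1 := by positivity
        calc (Real.exp (sfun k) * (Matrix.trace (a k)).re) * ((k : ℝ) + 1)⁻¹
            ≤ (Real.exp 1 * ((k : ℝ) + 1) * (Matrix.trace (a k)).re) * ((k : ℝ) + 1)⁻¹ := by
              refine mul_le_mul_of_nonneg_right ?_ (inv_pos.mpr hk1).le
              exact mul_le_mul_of_nonneg_right h1 (htnn k)
          _ = Real.exp 1 * (Matrix.trace (a k)).re * (((k : ℝ) + 1) * ((k : ℝ) + 1)⁻¹) := by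
              ring
          _ = Real.exp 1 * (Matrix.trace (a k)).re := by
              rw [mul_inv_cancel₀ hk1.ne', mul_one]
    _ = Real.exp 1 * ∑ k ∈ Finset.range N, (Matrix.trace (a k)).re :=
        (Finset.mul_sum _ _ _).symm
    _ ≤ Real.exp 1 * ∑' k, (Matrix.trace (a k)).re :=
        mul_le_mul_of_nonneg_left
          (Summable.sum_le_tsum _ (fun i _ => htnn i) h_sum) (Real.exp_pos 1).le
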